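/- Let y : [a, b] → ℝ be nonnegative and differentiable, λ > 0, g : [a,b] → ℝ nonnegative continuous, and suppose y'(t) + λ y(t) ≤ g(t) on [a, b]. Then for every ξ ∈ [a, b] with ξ > a, y(ξ) ≤ (1/(ξ - a)) e^{λ(b - a)} ∫_{a}^{b} e^{λ(σ - b)} y(σ) dσ + e^{λ(b-a)} ∫_{a}^{b} e^{λ(σ - b)} g(σ) dσ. -/

import Mathlib

open Real Set intervalIntegral MeasureTheory

/-!
Multiplying by the integrating factor `e^{λ(t - b)}` turns the differential inequality into
`F' ≤ h` for `F = e^{λ(t - b)} y` and `h = e^{λ(t - b)} g ≥ 0`. Then `F ξ ≤ F s + ∫ₐᵇ h` for every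
`s ∈ [a, ξ]`, and averaging over `s ∈ [a, ξ]` bounds `F ξ` by `(ξ - a)⁻¹ ∫ₐᵇ F + ∫ₐᵇ h`, without
reference to the value of `y` at the initial time. Finally `y ξ = e^{λ(b - ξ)} F ξ ≤ e^{λ(b - a)} F ξ`.
-/

theorem hasDerivAt_integratingFactor_mul {y : ℝ → ℝ} {y' t : ℝ} (hy : HasDerivAt y y' t)
    (lam c : ℝ) :
    HasDerivAt (fun s => exp (lam * (s - c)) * y s)
      (exp (lam * (t - c)) * (y' + lam * y t)) t := by
  have hlin : HasDerivAt (fun s => lam * (s - c)) lam t := by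
    simpa using ((hasDerivAt_id t).sub_const c).const_mul lam
  exact (hlin.exp.fun_mul hy).congr_deriv (by ring)

theorem sub_le_integral_of_hasDerivAt_le {F F' h : ℝ → ℝ} {a b s t : ℝ}
    (hF : ∀ x ∈ Icc a b, HasDerivAt F (F' x) x) (hh : IntegrableOn h (Icc a b))
    (h_nonneg : ∀ x ∈ Icc a b, 0 ≤ h x) (hF'h : ∀ x ∈ Icc a b, F' x ≤ h x)
    (has : a ≤ s) (hst : s ≤ t) (htb : t ≤ b) :
    F t - F s ≤ ∫ x in a..b, h x := by
  have hsub : Icc s t ⊆ Icc a b := Icc_subset_Icc has htb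
  have hab : a ≤ b := has.trans (hst.trans htb)
  calc F t - F s ≤ ∫ x in s..t, h x :=
        sub_le_integral_of_hasDeriv_right_of_le hst
          (fun x hx => (hF x (hsub hx)).continuousAt.continuousWithinAt)
          (fun x hx => (hF x (hsub (Ioo_subset_Icc_self hx))).hasDerivWithinAt)
          (hh.mono_set hsub) (fun x hx => hF'h x (hsub (Ioo_subset_Icc_self hx)))
    _ ≤ ∫ x in a..b, h x := by
        refine integral_mono_interval has hst htb ?_
          ((intervalIntegrable_iff_integrableOn_Icc_of_le hab).2 hh)
        filter_upwards [ae_restrict_mem measurableSet_Ioc] with x hx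
        exact h_nonneg x (Ioc_subset_Icc_self hx)

theorem le_integral_div_add_of_forall_le {F : ℝ → ℝ} {a ξ c G : ℝ} (haξ : a < ξ)
    (hF : IntervalIntegrable F volume a ξ) (hle : ∀ s ∈ Icc a ξ, c ≤ F s + G) :
    c ≤ (∫ s in a..ξ, F s) / (ξ - a) + G := by
  have hlen : 0 < ξ - a := sub_pos.2 haξ
  have hint : (∫ _ in a..ξ, c) ≤ ∫ s in a..ξ, (F s + G) :=
    integral_mono_on haξ.le intervalIntegrable_const (hF.add intervalIntegrable_const) hle
  rw [intervalIntegral.integral_const, integral_add hF intervalIntegrable_const,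
    intervalIntegral.integral_const] at hint
  rw [div_add' _ _ _ hlen.ne', le_div_iff₀ hlen]
  simp only [smul_eq_mul] at hint
  linarith

theorem le_integral_div_add_integral_of_hasDerivAt_le {F F' h : ℝ → ℝ} {a b ξ : ℝ}
    (hF_nonneg : ∀ x ∈ Icc a b, 0 ≤ F x) (hF : ∀ x ∈ Icc a b, HasDerivAt F (F' x) x)
    (hh : IntegrableOn h (Icc a b)) (h_nonneg : ∀ x ∈ Icc a b, 0 ≤ h x)
    (hF'h : ∀ x ∈ Icc a b, F' x ≤ h x) (haξ : a < ξ) (hξb : ξ ≤ b) :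
    F ξ ≤ (∫ x in a..b, F x) / (ξ - a) + ∫ x in a..b, h x := by
  have hab : a ≤ b := haξ.le.trans hξb
  have hF_int : IntervalIntegrable F volume a b :=
    ContinuousOn.intervalIntegrable_of_Icc hab
      fun x hx => (hF x hx).continuousAt.continuousWithinAt
  have haverage := le_integral_div_add_of_forall_le haξ
    (hF_int.mono_set (by rw [uIcc_of_le haξ.le, uIcc_of_le hab]; exact Icc_subset_Icc_right hξb))
    fun s hs => sub_le_iff_le_add'.1
      (sub_le_integral_of_hasDerivAt_le hF hh h_nonneg hF'h hs.1 hs.2 hξb)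
  have hmono : (∫ x in a..ξ, F x) ≤ ∫ x in a..b, F x := by
    refine integral_mono_interval le_rfl haξ.le hξb ?_ hF_int
    filter_upwards [ae_restrict_mem measurableSet_Ioc] with x hx
    exact hF_nonneg x (Ioc_subset_Icc_self hx)
  have := div_le_div_of_nonneg_right hmono (sub_pos.2 haξ).le
  linarith

theorem stmt_9_general (a b lam : ℝ) (hlam : 0 < lam)
    (y y' g : ℝ → ℝ)
    (hy_nonneg : ∀ t ∈ Icc a b, 0 ≤ y t)
    (hy : ∀ t ∈ Icc a b, HasDerivAt y (y' t) t)
    (hg_nonneg : ∀ t ∈ Icc a b, 0 ≤ g t)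
    (hg : ContinuousOn g (Icc a b))
    (hineq : ∀ t ∈ Icc a b, y' t + lam * y t ≤ g t) :
    ∀ ξ ∈ Icc a b, a < ξ →
      y ξ ≤ (1 / (ξ - a)) * Real.exp (lam * (b - a)) *
              (∫ σ in a..b, Real.exp (lam * (σ - b)) * y σ) +
            Real.exp (lam * (b - a)) * ∫ σ in a..b, Real.exp (lam * (σ - b)) * g σ := by
  rintro ξ ⟨-, hξb⟩ haξ
  have hweight : Continuous fun t => exp (lam * (t - b)) := by fun_prop
  have hF := le_integral_div_add_integral_of_hasDerivAt_le
    (h := fun t => exp (lam * (t - b)) * g t)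
    (fun t ht => mul_nonneg (exp_nonneg _) (hy_nonneg t ht))
    (fun t ht => hasDerivAt_integratingFactor_mul (hy t ht) lam b)
    (hweight.continuousOn.mul hg).integrableOn_Icc
    (fun t ht => mul_nonneg (exp_nonneg _) (hg_nonneg t ht))
    (fun t ht => mul_le_mul_of_nonneg_left (hineq t ht) (exp_nonneg _)) haξ hξb
  have hFξ : 0 ≤ exp (lam * (ξ - b)) * y ξ :=
    mul_nonneg (exp_nonneg _) (hy_nonneg ξ ⟨haξ.le, hξb⟩)
  have hweight_le : exp (lam * (b - ξ)) ≤ exp (lam * (b - a)) :=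
    exp_le_exp.2 (mul_le_mul_of_nonneg_left (by linarith) hlam.le)
  calc y ξ = exp (lam * (b - ξ)) * (exp (lam * (ξ - b)) * y ξ) := by
        rw [← mul_assoc, ← exp_add, show lam * (b - ξ) + lam * (ξ - b) = 0 by ring, exp_zero,
          one_mul]
    _ ≤ exp (lam * (b - a)) * (exp (lam * (ξ - b)) * y ξ) :=
        mul_le_mul_of_nonneg_right hweight_le hFξ
    _ ≤ _ := mul_le_mul_of_nonneg_left hF (exp_nonneg _)
    _ = _ := by ring

theorem stmt_9 (a b lam : ℝ) (hab : a ≤ b) (hlam : 0 < lam)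
    (y y' g : ℝ → ℝ)
    (hy_nonneg : ∀ t ∈ Icc a b, 0 ≤ y t)
    (hy : ∀ t ∈ Icc a b, HasDerivAt y (y' t) t)
    (hg_nonneg : ∀ t ∈ Icc a b, 0 ≤ g t)
    (hg : ContinuousOn g (Icc a b))
    (hineq : ∀ t ∈ Icc a b, y' t + lam * y t ≤ g t) :
    ∀ ξ ∈ Icc a b, a < ξ →
      y ξ ≤ (1 / (ξ - a)) * Real.exp (lam * (b - a)) *
              (∫ σ in a..b, Real.exp (lam * (σ - b)) * y σ) +
            Real.exp (lam * (b - a)) * ∫ σ in a..b, Real.exp (lam * (σ - b)) * g σ :=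
  stmt_9_general a b lam hlam y y' g hy_nonneg hy hg_nonneg hg hineq
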